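/- arXiv:1707.02551 — 4 statements merged into one kernel-verified Lean document; each statement's English description precedes it below -/
import Mathlib

section
/- If S = ⟨a, b⟩ is the numerical semigroup generated by two coprime positive integers a < b, then the largest integer not in S (the Frobenius number) equals ab - a - b. -/
def IsNumericalSemigroup (S : Set ℕ) : Prop :=
  0 ∈ S ∧ (∀ a ∈ S, ∀ b ∈ S, a + b ∈ S) ∧ Sᶜ.Finite

noncomputable def frob (S : Set ℕ) : ℕ := sSup Sᶜ

noncomputable def genus (S : Set ℕ) : ℕ := Sᶜ.ncard

noncomputable def mult (S : Set ℕ) : ℕ := sInf {n | n ∈ S ∧ n ≠ 0}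

def IsMinGen (S : Set ℕ) (x : ℕ) : Prop :=
  x ∈ S ∧ x ≠ 0 ∧ ∀ a ∈ S, ∀ b ∈ S, a ≠ 0 → b ≠ 0 → x ≠ a + b

def numGen2 (a b : ℕ) : Set ℕ := {n | ∃ x y : ℕ, n = x * a + y * b}

/-! If `1 < a` and `1 < b`, this is Sylvester's theorem, available in Mathlib as
`frobeniusNumber_pair` once `⟨a, b⟩` is recognised as `AddSubmonoid.closure {a, b}`.
Otherwise coprimality forces `1 ∈ ⟨a, b⟩`, so the semigroup is all of `ℕ` and both sides vanish
(the right-hand side by truncated subtraction). -/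

theorem coe_closure_pair_eq_numGen2 (a b : ℕ) :
    (AddSubmonoid.closure ({a, b} : Set ℕ) : Set ℕ) = numGen2 a b := by
  ext n
  simp only [SetLike.mem_coe, AddSubmonoid.mem_closure_pair, smul_eq_mul, numGen2,
    Set.mem_ofPred_eq, eq_comm]

theorem numGen2_comm (a b : ℕ) : numGen2 a b = numGen2 b a := by
  rw [← coe_closure_pair_eq_numGen2, ← coe_closure_pair_eq_numGen2, Set.pair_comm]

theorem numGen2_eq_univ_of_one_mem {a b : ℕ} (h : 1 ∈ numGen2 a b) : numGen2 a b = Set.univ := by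
  obtain ⟨x, y, hxy⟩ := h
  refine Set.eq_univ_of_forall fun n => ⟨n * x, n * y, ?_⟩
  calc n = n * (x * a + y * b) := by rw [← hxy, mul_one]
    _ = n * x * a + n * y * b := by ring

theorem frob_univ : frob Set.univ = 0 := by
  simp [frob]

theorem frob_numGen2_of_one_lt {a b : ℕ} (hco : Nat.Coprime a b) (ha : 1 < a) (hb : 1 < b) :
    frob (numGen2 a b) = a * b - a - b := by
  rw [frob, ← coe_closure_pair_eq_numGen2]
  exact (frobeniusNumber_pair hco ha hb).csSup_eq

theorem frob_numGen2_of_le_one {a b : ℕ} (hco : Nat.Coprime a b) (ha : a ≤ 1) :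
    frob (numGen2 a b) = a * b - a - b := by
  obtain rfl | rfl : a = 0 ∨ a = 1 := by omega
  · obtain rfl : b = 1 := Nat.coprime_zero_left b |>.mp hco
    rw [numGen2_eq_univ_of_one_mem ⟨0, 1, rfl⟩, frob_univ]
  · rw [numGen2_eq_univ_of_one_mem ⟨1, 0, by simp⟩, frob_univ]
    omega

theorem frob_numGen2 {a b : ℕ} (hco : Nat.Coprime a b) :
    frob (numGen2 a b) = a * b - a - b := by
  rcases le_or_gt a 1 with ha | ha
  · exact frob_numGen2_of_le_one hco ha
  rcases le_or_gt b 1 with hb | hb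
  · rw [numGen2_comm, frob_numGen2_of_le_one hco.symm hb, mul_comm]
    omega
  · exact frob_numGen2_of_one_lt hco ha hb

theorem frobenius_two_generators_general (a b : ℕ)
    (hco : Nat.Coprime a b) :
    frob (numGen2 a b) = a * b - a - b :=
  frob_numGen2 hco

theorem frobenius_two_generators (a b : ℕ) (ha : 0 < a) (hab : a < b)
    (hco : Nat.Coprime a b) :
    frob (numGen2 a b) = a * b - a - b :=
  frobenius_two_generators_general a b hco
end

section
/- A submonoid S of ℕ has finite complement in ℕ if and only if the greatest common divisor of the elements of S is 1. -/
namespace Nat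

theorem setGcd_eq_one_iff {s : Set ℕ} : setGcd s = 1 ↔ ∀ d : ℕ, (∀ m ∈ s, d ∣ m) → d = 1 :=
  ⟨fun h _ hd ↦ dvd_one.mp (h ▸ dvd_setGcd_iff.mpr hd),
    fun h ↦ h _ fun _ ↦ setGcd_dvd_of_mem⟩

/-- A cofinite set contains two consecutive numbers, and their difference is `1`. -/
theorem setGcd_eq_one_of_finite_compl {s : Set ℕ} (hs : sᶜ.Finite) : setGcd s = 1 := by
  obtain ⟨N, hN⟩ := hs.bddAbove
  have mem_of_gt : ∀ m, N < m → m ∈ s := fun _ hm ↦ by_contra fun h ↦ (hN h).not_gt hm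
  have h₁ := setGcd_dvd_of_mem (mem_of_gt (N + 1) (lt_add_one N))
  have h₂ := setGcd_dvd_of_mem (mem_of_gt (N + 2) (by lia))
  exact dvd_one.mp ((Nat.dvd_add_right h₁).mp h₂)

theorem finite_compl_of_setGcd_eq_one {S : AddSubmonoid ℕ} (hS : setGcd S = 1) :
    ((S : Set ℕ)ᶜ).Finite := by
  obtain ⟨n, hn⟩ := exists_mem_closure_of_ge (S : Set ℕ)
  refine (Set.finite_Iio n).subset fun m hm ↦ Set.mem_Iio.mpr (lt_of_not_ge fun hnm ↦ hm ?_)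
  simpa only [AddSubmonoid.closure_eq, SetLike.mem_coe] using hn m hnm (hS ▸ one_dvd m)

theorem finite_compl_iff_setGcd_eq_one (S : AddSubmonoid ℕ) :
    ((S : Set ℕ)ᶜ).Finite ↔ setGcd S = 1 :=
  ⟨setGcd_eq_one_of_finite_compl, finite_compl_of_setGcd_eq_one⟩

end Nat

theorem cofinite_iff_gcd_one (S : AddSubmonoid ℕ) :
    ((S : Set ℕ)ᶜ).Finite ↔ ∀ d : ℕ, (∀ s ∈ S, d ∣ s) → d = 1 :=
  (Nat.finite_compl_iff_setGcd_eq_one S).trans Nat.setGcd_eq_one_iff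
end

section
/- For any positive integer g, the number of numerical semigroups S of genus g satisfying F(S) < 2·m(S) equals the Fibonacci number F_{g+1}. -/
open Finset

lemma frob_lt_iff {S : Set ℕ} {k : ℕ} (hS : Sᶜ.Finite) (hk : 0 < k) :
    frob S < k ↔ ∀ n ∉ S, n < k := by
  rcases Set.eq_empty_or_nonempty Sᶜ with h | h
  · simp [frob, hk, Set.compl_empty_iff.mp h]
  · exact hS.csSup_lt_iff h

lemma mult_le_of_mem {S : Set ℕ} {n : ℕ} (hn : n ∈ S) (hn0 : n ≠ 0) : mult S ≤ n :=
  Nat.sInf_le ⟨hn, hn0⟩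

namespace IsNumericalSemigroup

variable {S : Set ℕ}

lemma le_frob (hS : IsNumericalSemigroup S) {n : ℕ} (hn : n ∉ S) : n ≤ frob S :=
  le_csSup hS.2.2.bddAbove hn

lemma frob_add_one_mem (hS : IsNumericalSemigroup S) : frob S + 1 ∈ S := by
  by_contra h
  exact (hS.le_frob h).not_gt (Nat.lt_succ_self _)

lemma mult_mem (hS : IsNumericalSemigroup S) : mult S ∈ S ∧ mult S ≠ 0 :=
  Nat.sInf_mem (s := {n | n ∈ S ∧ n ≠ 0}) ⟨_, hS.frob_add_one_mem, Nat.succ_ne_zero _⟩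

end IsNumericalSemigroup

def semigroupOfGaps (m : ℕ) (T : Finset ℕ) : Set ℕ := insert 0 (Set.Ici m \ ↑T)

section semigroupOfGaps

variable {m : ℕ} {T : Finset ℕ}

lemma compl_semigroupOfGaps (hT : T ⊆ Ioo m (2 * m)) :
    (semigroupOfGaps m T)ᶜ = ↑(Ico 1 m ∪ T) := by
  ext n
  have hTn : n ∈ T → m < n ∧ n < 2 * m := fun hn => mem_Ioo.mp (hT hn)
  simp only [semigroupOfGaps, Set.mem_compl_iff, Set.mem_insert_iff, Set.mem_sdiff, Set.mem_Ici,
    mem_coe, coe_union, coe_Ico, Set.mem_union, Set.mem_Ico]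
  by_cases hn : n ∈ T <;>
    simp only [hn, true_implies, not_true_eq_false, not_false_eq_true, and_false, and_true,
      or_false, or_true, iff_true] at hTn ⊢ <;> omega

lemma isNumericalSemigroup_semigroupOfGaps (hT : T ⊆ Ioo m (2 * m)) :
    IsNumericalSemigroup (semigroupOfGaps m T) := by
  refine ⟨Set.mem_insert 0 _, ?_, by rw [compl_semigroupOfGaps hT]; exact finite_toSet _⟩
  rintro a (rfl | ha) b (rfl | hb)
  · exact Set.mem_insert 0 _
  · exact Or.inr (by rwa [zero_add])
  · exact Or.inr (by rwa [add_zero])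
  · obtain ⟨ha : m ≤ a, -⟩ := ha
    obtain ⟨hb : m ≤ b, -⟩ := hb
    refine Or.inr ⟨Set.mem_Ici.mpr (by omega), fun h => ?_⟩
    have := mem_Ioo.mp (hT h)
    omega

lemma mult_semigroupOfGaps (hm : 0 < m) (hT : T ⊆ Ioo m (2 * m)) :
    mult (semigroupOfGaps m T) = m := by
  have hmS : m ∈ semigroupOfGaps m T :=
    Or.inr ⟨Set.self_mem_Ici, fun h => (mem_Ioo.mp (hT h)).1.false⟩
  refine le_antisymm (mult_le_of_mem hmS hm.ne') (le_csInf ⟨m, hmS, hm.ne'⟩ ?_)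
  rintro n ⟨rfl | ⟨hn, -⟩, hn0⟩
  exacts [absurd rfl hn0, hn]

lemma genus_semigroupOfGaps (hT : T ⊆ Ioo m (2 * m)) :
    genus (semigroupOfGaps m T) = m - 1 + #T := by
  rw [genus, compl_semigroupOfGaps hT, Set.ncard_coe_finset, card_union_of_disjoint, Nat.card_Ico]
  exact disjoint_left.mpr fun n hn hnT => by
    have := mem_Ico.mp hn
    have := mem_Ioo.mp (hT hnT)
    omega

lemma frob_semigroupOfGaps_lt (hm : 0 < m) (hT : T ⊆ Ioo m (2 * m)) :
    frob (semigroupOfGaps m T) < 2 * m := by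
  refine (frob_lt_iff (isNumericalSemigroup_semigroupOfGaps hT).2.2 (by omega)).mpr fun n hn => ?_
  rw [← Set.mem_compl_iff, compl_semigroupOfGaps hT, mem_coe, mem_union, mem_Ico] at hn
  rcases hn with hn | hn
  · omega
  · exact (mem_Ioo.mp (hT hn)).2

open scoped Classical in
lemma filter_notMem_semigroupOfGaps (hT : T ⊆ Ioo m (2 * m)) :
    {n ∈ Ioo m (2 * m) | n ∉ semigroupOfGaps m T} = T := by
  ext n
  rw [mem_filter, ← Set.mem_compl_iff, compl_semigroupOfGaps hT, mem_coe, mem_union, mem_Ico]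
  constructor
  · rintro ⟨hn, hn' | hn'⟩
    · have := mem_Ioo.mp hn; omega
    · exact hn'
  · exact fun hn => ⟨hT hn, Or.inr hn⟩

end semigroupOfGaps

open scoped Classical in
lemma IsNumericalSemigroup.eq_semigroupOfGaps {S : Set ℕ} (hS : IsNumericalSemigroup S)
    (hF : frob S < 2 * mult S) :
    S = semigroupOfGaps (mult S) {n ∈ Ioo (mult S) (2 * mult S) | n ∉ S} := by
  have hgap := (frob_lt_iff hS.2.2 (by omega)).mp hF
  ext n
  simp only [semigroupOfGaps, Set.mem_insert_iff, Set.mem_sdiff, Set.mem_Ici, mem_coe, mem_filter,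
    mem_Ioo]
  constructor
  · intro hn
    rcases eq_or_ne n 0 with rfl | hn0
    · exact Or.inl rfl
    · exact Or.inr ⟨mult_le_of_mem hn hn0, fun h => h.2 hn⟩
  · rintro (rfl | ⟨hmn, hnT⟩)
    · exact hS.1
    · by_contra hnS
      refine hnT ⟨⟨lt_of_le_of_ne hmn fun h => hnS (h ▸ hS.mult_mem.1), hgap n hnS⟩, hnS⟩

-- `⟨(a, b), T⟩` encodes multiplicity `a + 1` and a set `T` of `b` gaps among the `a` integers in
-- `(a + 1, 2a + 2)`, so that the genus is `a + b` and there are `C(a, b)` choices of `T`.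
def gapData (g : ℕ) : Finset ((_ : ℕ × ℕ) × Finset ℕ) :=
  (antidiagonal g).sigma fun p => (Ioo (p.1 + 1) (2 * (p.1 + 1))).powersetCard p.2

lemma mem_gapData {g a b : ℕ} {T : Finset ℕ} :
    ⟨(a, b), T⟩ ∈ gapData g ↔ a + b = g ∧ T ⊆ Ioo (a + 1) (2 * (a + 1)) ∧ #T = b := by
  rw [gapData, mem_sigma, HasAntidiagonal.mem_antidiagonal, mem_powersetCard]

lemma card_gapData (g : ℕ) : #(gapData g) = Nat.fib (g + 1) := by
  rw [gapData, card_sigma, Nat.fib_succ_eq_sum_choose]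
  refine sum_congr rfl fun p _ => ?_
  rw [card_powersetCard, Nat.card_Ioo]
  congr 1
  omega

lemma injOn_gapData (g : ℕ) :
    Set.InjOn (fun x : (_ : ℕ × ℕ) × Finset ℕ => semigroupOfGaps (x.1.1 + 1) x.2)
      (gapData g : Set _) := by
  rintro ⟨⟨a, b⟩, T⟩ hx ⟨⟨a', b'⟩, T'⟩ hx' h
  obtain ⟨-, hT, rfl⟩ := mem_gapData.mp hx
  obtain ⟨-, hT', rfl⟩ := mem_gapData.mp hx'
  dsimp only at h
  obtain rfl : a = a' := by
    have hmult := mult_semigroupOfGaps a.succ_pos hT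
    rw [h, mult_semigroupOfGaps a'.succ_pos hT'] at hmult
    omega
  obtain rfl : T = T' := by
    classical
    rw [← filter_notMem_semigroupOfGaps hT, ← filter_notMem_semigroupOfGaps hT', h]
  rfl

lemma setOf_frob_lt_two_mult_eq_image (g : ℕ) :
    {S : Set ℕ | IsNumericalSemigroup S ∧ genus S = g ∧ frob S < 2 * mult S} =
      (fun x : (_ : ℕ × ℕ) × Finset ℕ => semigroupOfGaps (x.1.1 + 1) x.2) '' gapData g := by
  classical
  ext S
  constructor
  · rintro ⟨hS, rfl, hF⟩
    obtain ⟨a, ha⟩ := Nat.exists_eq_add_one_of_ne_zero hS.mult_mem.2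
    have hS' := hS.eq_semigroupOfGaps hF
    set T := {n ∈ Ioo (mult S) (2 * mult S) | n ∉ S}
    have hT : T ⊆ Ioo (mult S) (2 * mult S) := filter_subset _ _
    rw [ha] at hS' hT
    refine ⟨⟨(a, #T), T⟩, mem_gapData.mpr ⟨?_, hT, rfl⟩, hS'.symm⟩
    rw [hS', genus_semigroupOfGaps hT, Nat.add_sub_cancel]
  · rintro ⟨⟨⟨a, b⟩, T⟩, hx, rfl⟩
    obtain ⟨rfl, hT, rfl⟩ := mem_gapData.mp hx
    exact ⟨isNumericalSemigroup_semigroupOfGaps hT,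
      by rw [genus_semigroupOfGaps hT, Nat.add_sub_cancel],
      by rw [mult_semigroupOfGaps a.succ_pos hT]; exact frob_semigroupOfGaps_lt a.succ_pos hT⟩

theorem count_frob_lt_two_mult_general (g : ℕ) :
    {S : Set ℕ | IsNumericalSemigroup S ∧ genus S = g ∧ frob S < 2 * mult S}.ncard
      = Nat.fib (g + 1) := by
  rw [setOf_frob_lt_two_mult_eq_image, (injOn_gapData g).ncard_image,
    Set.ncard_coe_finset, card_gapData]

theorem count_frob_lt_two_mult (g : ℕ) (hg : 0 < g) :
    {S : Set ℕ | IsNumericalSemigroup S ∧ genus S = g ∧ frob S < 2 * mult S}.ncard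
      = Nat.fib (g + 1) :=
  count_frob_lt_two_mult_general g
end

section
/- A tuple (k₁, ..., k_{m-1}) of positive integers is the Kunz coordinate vector of a numerical semigroup of multiplicity m if and only if it satisfies: kᵢ + k_j ≥ k_{i+j} whenever i + j ≤ m - 1, and kᵢ + k_j + 1 ≥ k_{i+j-m} whenever i + j > m (with 1 ≤ i ≤ j ≤ m-1). -/
namespace Kunz

variable {m : ℕ} {k : ℕ → ℕ}

lemma mod_eq_sub_and_div_eq_one {a : ℕ} (h₁ : m ≤ a) (h₂ : a < 2 * m) :
    a % m = a - m ∧ a / m = 1 := by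
  have hm : 0 < m := by omega
  have hlt : a - m < m := by omega
  rw [Nat.mod_eq_sub_mod h₁, Nat.mod_eq_of_lt hlt, Nat.div_eq_sub_div hm h₁, Nat.div_eq_of_lt hlt]
  exact ⟨rfl, rfl⟩

lemma mul_add_add_mul_add_div_mod (hm : 0 < m) (x y i j : ℕ) :
    (x * m + i + (y * m + j)) / m = x + y + (i + j) / m ∧
      (x * m + i + (y * m + j)) % m = (i + j) % m := by
  have h : x * m + i + (y * m + j) = i + j + (x + y) * m := by ring
  rw [h, Nat.add_mul_div_right _ _ hm, Nat.add_mul_mod_self_right]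
  exact ⟨by ring, rfl⟩

lemma kunz_ineqs_iff (hm : 0 < m) :
    (∀ i j, 1 ≤ i → i ≤ j → j ≤ m - 1 →
        (i + j ≤ m - 1 → k (i + j) ≤ k i + k j) ∧
        (m < i + j → k (i + j - m) ≤ k i + k j + 1)) ↔
      ∀ i j, 0 < i → i < m → 0 < j → j < m → (i + j) % m ≠ 0 →
        k ((i + j) % m) ≤ k i + k j + (i + j) / m := by
  constructor
  · intro h i j hi him hj hjm hij
    wlog hle : i ≤ j generalizing i j
    · simpa only [Nat.add_comm j i, Nat.add_comm (k j)] using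
        this j i hj hjm hi him (by rwa [Nat.add_comm]) (by omega)
    rcases lt_or_ge (i + j) m with hlt | hge
    · rw [Nat.mod_eq_of_lt hlt, Nat.div_eq_of_lt hlt]
      exact (h i j hi hle (by omega)).1 (by omega)
    · obtain ⟨hmod, hdiv⟩ := mod_eq_sub_and_div_eq_one hge (by omega)
      rw [hmod] at hij ⊢
      rw [hdiv]
      exact (h i j hi hle (by omega)).2 (by omega)
  · intro h i j hi hle hjm
    constructor
    · intro hlt
      have hlt' : i + j < m := by omega
      simpa only [Nat.mod_eq_of_lt hlt', Nat.div_eq_of_lt hlt', Nat.add_zero] using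
        h i j hi (by omega) (by omega) (by omega) (by rw [Nat.mod_eq_of_lt hlt']; omega)
    · intro hgt
      obtain ⟨hmod, hdiv⟩ := mod_eq_sub_and_div_eq_one (m := m) (a := i + j) (by omega) (by omega)
      simpa only [hmod, hdiv] using
        h i j hi (by omega) (by omega) (by omega) (by rw [hmod]; omega)

lemma mem_of_sInf_mod_eq {S : Set ℕ} {r c : ℕ} (hr : r ≠ 0)
    (h : sInf {n | n ∈ S ∧ n % m = r} = c * m + r) : c * m + r ∈ S := by
  have hne : {n | n ∈ S ∧ n % m = r}.Nonempty := by
    by_contra he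
    rw [Set.not_nonempty_iff_eq_empty] at he
    rw [he, Nat.sInf_empty] at h
    omega
  exact h ▸ (Nat.sInf_mem hne).1

lemma le_div_of_sInf_mod_eq {S : Set ℕ} {r c n : ℕ} (hm : 0 < m)
    (h : sInf {n | n ∈ S ∧ n % m = r} = c * m + r) (hn : n ∈ S) (hnr : n % m = r) :
    c ≤ n / m := by
  have := Nat.sInf_le (show n ∈ {n | n ∈ S ∧ n % m = r} from ⟨hn, hnr⟩)
  rw [Nat.le_div_iff_mul_le hm]
  omega

lemma kunz_ineq_of_add_mem {S : Set ℕ} (hm : 0 < m) (hadd : ∀ a ∈ S, ∀ b ∈ S, a + b ∈ S)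
    (hS : ∀ i, 1 ≤ i → i ≤ m - 1 → sInf {n | n ∈ S ∧ n % m = i} = k i * m + i)
    (i j : ℕ) (hi : 0 < i) (him : i < m) (hj : 0 < j) (hjm : j < m) (hij : (i + j) % m ≠ 0) :
    k ((i + j) % m) ≤ k i + k j + (i + j) / m := by
  have hsum := hadd _ (mem_of_sInf_mod_eq hi.ne' (hS i hi (by omega)))
    _ (mem_of_sInf_mod_eq hj.ne' (hS j hj (by omega)))
  obtain ⟨hdiv, hmod⟩ := mul_add_add_mul_add_div_mod hm (k i) (k j) i j
  have hlt := Nat.mod_lt (i + j) hm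
  rw [← hdiv]
  exact le_div_of_sInf_mod_eq hm (hS _ (by omega) (by omega)) hsum hmod

def kunzSet (m : ℕ) (k : ℕ → ℕ) : Set ℕ := {n | n % m = 0 ∨ k (n % m) ≤ n / m}

@[simp]
lemma mem_kunzSet {n : ℕ} : n ∈ kunzSet m k ↔ n % m = 0 ∨ k (n % m) ≤ n / m := Iff.rfl

lemma add_mem_kunzSet (hm : 0 < m)
    (hk : ∀ i j, 0 < i → i < m → 0 < j → j < m → (i + j) % m ≠ 0 →
      k ((i + j) % m) ≤ k i + k j + (i + j) / m)
    {a b : ℕ} (ha : a ∈ kunzSet m k) (hb : b ∈ kunzSet m k) : a + b ∈ kunzSet m k := by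
  obtain ⟨hdiv, hmod⟩ := mul_add_add_mul_add_div_mod hm (a / m) (b / m) (a % m) (b % m)
  rw [Nat.div_add_mod', Nat.div_add_mod'] at hdiv hmod
  rw [mem_kunzSet] at ha hb ⊢
  rw [hdiv, hmod]
  rcases Nat.eq_zero_or_pos (a % m) with ha0 | ha0
  · rw [ha0, Nat.zero_add, Nat.mod_mod, Nat.div_eq_of_lt (Nat.mod_lt b hm), Nat.add_zero]
    exact hb.imp_right le_add_left
  rcases Nat.eq_zero_or_pos (b % m) with hb0 | hb0
  · rw [hb0, Nat.add_zero, Nat.mod_mod, Nat.div_eq_of_lt (Nat.mod_lt a hm), Nat.add_zero]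
    exact ha.imp_right le_add_right
  by_cases hsum : (a % m + b % m) % m = 0
  · exact Or.inl hsum
  · have := hk _ _ ha0 (Nat.mod_lt a hm) hb0 (Nat.mod_lt b hm) hsum
    omega

lemma finite_compl_kunzSet (hm : 0 < m) : (kunzSet m k)ᶜ.Finite := by
  refine (Set.finite_Iio (((Finset.range m).sup k + 1) * m)).subset fun n hn => ?_
  simp only [Set.mem_compl_iff, mem_kunzSet, not_or, not_le] at hn
  have : k (n % m) ≤ (Finset.range m).sup k := Finset.le_sup (Finset.mem_range.2 (Nat.mod_lt n hm))
  exact Set.mem_Iio.2 ((Nat.div_lt_iff_lt_mul hm).1 (by omega))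

lemma isNumericalSemigroup_kunzSet (hm : 0 < m)
    (hk : ∀ i j, 0 < i → i < m → 0 < j → j < m → (i + j) % m ≠ 0 →
      k ((i + j) % m) ≤ k i + k j + (i + j) / m) :
    IsNumericalSemigroup (kunzSet m k) :=
  ⟨Or.inl (Nat.zero_mod m), fun _ ha _ hb => add_mem_kunzSet hm hk ha hb, finite_compl_kunzSet hm⟩

lemma mult_kunzSet (hm : 0 < m) (hk : ∀ i, 1 ≤ i → i ≤ m - 1 → 1 ≤ k i) :
    mult (kunzSet m k) = m := by
  refine IsLeast.csInf_eq ⟨⟨Or.inl (Nat.mod_self m), hm.ne'⟩, ?_⟩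
  rintro n ⟨hn, hn0⟩
  by_cases h0 : n % m = 0
  · exact Nat.le_of_dvd (Nat.pos_of_ne_zero hn0) (Nat.dvd_of_mod_eq_zero h0)
  · have := hk (n % m) (by omega) (by have := Nat.mod_lt n hm; omega)
    exact (Nat.div_pos_iff.1 (by rw [mem_kunzSet] at hn; omega)).2

lemma sInf_kunzSet_mod_eq (hm : 0 < m) {i : ℕ} (hi : 0 < i) (him : i < m) :
    sInf {n | n ∈ kunzSet m k ∧ n % m = i} = k i * m + i := by
  have hmod : (k i * m + i) % m = i := Nat.mul_add_mod_of_lt him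
  have hdiv : (k i * m + i) / m = k i := by
    rw [Nat.add_comm, Nat.add_mul_div_right _ _ hm, Nat.div_eq_of_lt him, Nat.zero_add]
  refine IsLeast.csInf_eq ⟨⟨Or.inr (by rw [hmod, hdiv]), hmod⟩, ?_⟩
  rintro n ⟨hn | hn, rfl⟩
  · omega
  · calc k (n % m) * m + n % m ≤ n / m * m + n % m := by gcongr
      _ = n := Nat.div_add_mod' n m

end Kunz

open Kunz in
theorem kunz_coordinates_characterization (m : ℕ) (hm : 2 ≤ m) (k : ℕ → ℕ)
    (hk : ∀ i, 1 ≤ i → i ≤ m - 1 → 1 ≤ k i) :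
    (∃ S : Set ℕ, IsNumericalSemigroup S ∧ mult S = m ∧
        ∀ i, 1 ≤ i → i ≤ m - 1 → sInf {n | n ∈ S ∧ n % m = i} = k i * m + i) ↔
      ∀ i j, 1 ≤ i → i ≤ j → j ≤ m - 1 →
        (i + j ≤ m - 1 → k (i + j) ≤ k i + k j) ∧
        (m < i + j → k (i + j - m) ≤ k i + k j + 1) := by
  have hm0 : 0 < m := by omega
  rw [kunz_ineqs_iff hm0]
  constructor
  · rintro ⟨S, ⟨-, hadd, -⟩, -, hS⟩
    exact kunz_ineq_of_add_mem hm0 hadd hS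
  · intro hineq
    exact ⟨kunzSet m k, isNumericalSemigroup_kunzSet hm0 hineq, mult_kunzSet hm0 hk,
      fun i hi him => sInf_kunzSet_mod_eq hm0 hi (by omega)⟩
end
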